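/- arXiv:2112.15316 — 5 statements merged into one kernel-verified Lean document; each statement's English description precedes it below -/
import Mathlib

section
/- Let (ŷ, τ̂) with τ̂ > 0, together with multipliers (ν̂, ξ̂, ω̂), satisfy the KKT conditions of the HQP: Cŷ + τ̂c + Eᵀν̂ − ξ̂ = 0, θτ̂ − θ + cᵀŷ − fᵀν̂ − ω̂ = 0, Eŷ = fτ̂, 0 ≤ ŷ ⊥ ξ̂ ≥ 0, 0 ≤ τ̂ ⊥ ω̂ ≥ 0. Then (y*, ν*, ξ*) = (ŷ/τ̂, ν̂/τ̂, ξ̂/τ̂) satisfies the KKT conditions of the QP: Cy* + c + Eᵀν* − ξ* = 0, Ey* = f, 0 ≤ y* ⊥ ξ* ≥ 0. -/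
open Matrix

section KKT

variable {R : Type*} [CommRing R] [PartialOrder R] [IsOrderedRing R]
  {m n : Type*} [Fintype m] [Fintype n]

/-- `(y, ν, ξ)` is a KKT point of `min ½ yᵀCy + cᵀy` subject to `Ey = f`, `y ≥ 0`. -/
def IsQPKKTPoint (C : Matrix n n R) (c : n → R) (E : Matrix m n R) (f : m → R)
    (y : n → R) (ν : m → R) (ξ : n → R) : Prop :=
  C *ᵥ y + c + Eᵀ *ᵥ ν - ξ = 0 ∧ E *ᵥ y = f ∧ 0 ≤ y ∧ 0 ≤ ξ ∧ y ⬝ᵥ ξ = 0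

theorem IsQPKKTPoint.smul {C : Matrix n n R} {c : n → R} {E : Matrix m n R} {f : m → R}
    {y : n → R} {ν : m → R} {ξ : n → R} (h : IsQPKKTPoint C c E f y ν ξ) {r : R}
    (hr : 0 ≤ r) : IsQPKKTPoint C (r • c) E (r • f) (r • y) (r • ν) (r • ξ) := by
  obtain ⟨hdual, heq, hy, hξ, hcompl⟩ := h
  refine ⟨?_, ?_, smul_nonneg hr hy, smul_nonneg hr hξ, ?_⟩
  · rw [mulVec_smul, mulVec_smul, ← smul_add, ← smul_add, ← smul_sub, hdual, smul_zero]
  · rw [mulVec_smul, heq]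
  · rw [dotProduct_smul, smul_dotProduct, hcompl, smul_zero, smul_zero]

end KKT

theorem hqp_kkt_to_qp_kkt_general (n m : ℕ) (C : Matrix (Fin n) (Fin n) ℝ)
    (c : Fin n → ℝ) (E : Matrix (Fin m) (Fin n) ℝ) (f : Fin m → ℝ)
    (yh : Fin n → ℝ) (τh : ℝ) (νh : Fin m → ℝ) (ξh : Fin n → ℝ)
    (hτ : 0 < τh)
    (hdual1 : C *ᵥ yh + τh • c + Eᵀ *ᵥ νh - ξh = 0)
    (heq : E *ᵥ yh = τh • f)
    (hy : 0 ≤ yh) (hξ : 0 ≤ ξh) (hcompl : yh ⬝ᵥ ξh = 0) :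
    C *ᵥ (τh⁻¹ • yh) + c + Eᵀ *ᵥ (τh⁻¹ • νh) - τh⁻¹ • ξh = 0 ∧
    E *ᵥ (τh⁻¹ • yh) = f ∧
    0 ≤ τh⁻¹ • yh ∧ 0 ≤ τh⁻¹ • ξh ∧ (τh⁻¹ • yh) ⬝ᵥ (τh⁻¹ • ξh) = 0 := by
  have hscaled : IsQPKKTPoint C (τh • c) E (τh • f) yh νh ξh :=
    ⟨hdual1, heq, hy, hξ, hcompl⟩
  simpa only [IsQPKKTPoint, smul_smul, inv_mul_cancel₀ hτ.ne', one_smul] using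
    hscaled.smul (inv_nonneg.mpr hτ.le)

/-- Dividing an HQP KKT point with τ̂ > 0 by τ̂ yields a QP KKT point. -/
theorem hqp_kkt_to_qp_kkt (n m : ℕ) (C : Matrix (Fin n) (Fin n) ℝ) (hC : C.IsSymm)
    (c : Fin n → ℝ) (E : Matrix (Fin m) (Fin n) ℝ) (f : Fin m → ℝ)
    (θ : ℝ) (hθ : 0 < θ)
    (yh : Fin n → ℝ) (τh : ℝ) (νh : Fin m → ℝ) (ξh : Fin n → ℝ) (ωh : ℝ)
    (hτ : 0 < τh)
    (hdual1 : C *ᵥ yh + τh • c + Eᵀ *ᵥ νh - ξh = 0)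
    (hdual2 : θ * τh - θ + c ⬝ᵥ yh - f ⬝ᵥ νh - ωh = 0)
    (heq : E *ᵥ yh = τh • f)
    (hy : 0 ≤ yh) (hξ : 0 ≤ ξh) (hcompl : yh ⬝ᵥ ξh = 0)
    (hω : 0 ≤ ωh) (hcomplτ : τh * ωh = 0) :
    C *ᵥ (τh⁻¹ • yh) + c + Eᵀ *ᵥ (τh⁻¹ • νh) - τh⁻¹ • ξh = 0 ∧
    E *ᵥ (τh⁻¹ • yh) = f ∧
    0 ≤ τh⁻¹ • yh ∧ 0 ≤ τh⁻¹ • ξh ∧ (τh⁻¹ • yh) ⬝ᵥ (τh⁻¹ • ξh) = 0 :=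
  hqp_kkt_to_qp_kkt_general n m C c E f yh τh νh ξh hτ hdual1 heq hy hξ hcompl
end

section
/- Suppose (y*, ν*, ξ*) satisfies the QP KKT conditions and θ + 2cᵀy* + (y*)ᵀCy* > 0, θ > 0. Define τ̄ = θ/(θ + cᵀy* − fᵀν*). Then τ̄ > 0 and (ŷ, τ̂, ν̂, ξ̂, ω̂) = (τ̄y*, τ̄, τ̄ν*, τ̄ξ*, 0) satisfies the HQP KKT conditions: Cŷ + τ̂c + Eᵀν̂ − ξ̂ = 0, θτ̂ − θ + cᵀŷ − fᵀν̂ − ω̂ = 0, Eŷ = fτ̂, 0 ≤ ŷ ⊥ ξ̂ ≥ 0, 0 ≤ τ̂ ⊥ ω̂ ≥ 0. -/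
/-!
Pairing the stationarity equation `C y + c + Eᵀ ν − ξ = 0` with `y` and using `E y = f` and
`y ⬝ ξ = 0` gives `fᵀν = −(yᵀC y + cᵀy)`, so the denominator `θ + cᵀy − fᵀν` of `τ̄` equals the
positive quantity `θ + 2cᵀy + yᵀC y`. Every QP KKT condition is positively homogeneous in
`(y, ν, ξ)` once `c` and `f` are scaled by `τ̄`, and `τ̄` is chosen so that the remaining
equation `θ τ̄ − θ + cᵀ(τ̄ y) − fᵀ(τ̄ ν) = 0` holds.
-/

open Matrix

section QPKKT

variable {R ι κ : Type*} [CommRing R] [Fintype ι] [Fintype κ]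

theorem dotProduct_multiplier_eq_of_kkt {C : Matrix ι ι R} {c : ι → R} {E : Matrix κ ι R}
    {f : κ → R} {y ξ : ι → R} {ν : κ → R} (hdual : C *ᵥ y + c + Eᵀ *ᵥ ν - ξ = 0)
    (heq : E *ᵥ y = f) (hcompl : y ⬝ᵥ ξ = 0) :
    f ⬝ᵥ ν = -(y ⬝ᵥ (C *ᵥ y) + c ⬝ᵥ y) := by
  have hpair : y ⬝ᵥ (C *ᵥ y + c + Eᵀ *ᵥ ν - ξ) = 0 := by rw [hdual, dotProduct_zero]
  have hEν : y ⬝ᵥ (Eᵀ *ᵥ ν) = f ⬝ᵥ ν := by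
    rw [dotProduct_mulVec, vecMul_transpose, heq]
  rw [dotProduct_sub, dotProduct_add, dotProduct_add, hEν, hcompl, dotProduct_comm y c] at hpair
  linear_combination hpair

theorem stationarity_residual_smul (C : Matrix ι ι R) (c : ι → R) (E : Matrix κ ι R)
    (y ξ : ι → R) (ν : κ → R) (t : R) :
    C *ᵥ (t • y) + t • c + Eᵀ *ᵥ (t • ν) - t • ξ = t • (C *ᵥ y + c + Eᵀ *ᵥ ν - ξ) := by
  rw [mulVec_smul, mulVec_smul, smul_sub, smul_add, smul_add]

end QPKKT

theorem qp_kkt_to_hqp_kkt_general (n m : ℕ) (C : Matrix (Fin n) (Fin n) ℝ)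
    (c : Fin n → ℝ) (E : Matrix (Fin m) (Fin n) ℝ) (f : Fin m → ℝ)
    (θ : ℝ) (hθ : 0 < θ)
    (ys : Fin n → ℝ) (νs : Fin m → ℝ) (ξs : Fin n → ℝ)
    (hdual : C *ᵥ ys + c + Eᵀ *ᵥ νs - ξs = 0)
    (heq : E *ᵥ ys = f)
    (hy : 0 ≤ ys) (hξ : 0 ≤ ξs) (hcompl : ys ⬝ᵥ ξs = 0)
    (hpos : 0 < θ + 2 * (c ⬝ᵥ ys) + ys ⬝ᵥ (C *ᵥ ys)) :
    let τb : ℝ := θ / (θ + c ⬝ᵥ ys - f ⬝ᵥ νs)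
    0 < τb ∧
    C *ᵥ (τb • ys) + τb • c + Eᵀ *ᵥ (τb • νs) - τb • ξs = 0 ∧
    θ * τb - θ + c ⬝ᵥ (τb • ys) - f ⬝ᵥ (τb • νs) - 0 = 0 ∧
    E *ᵥ (τb • ys) = τb • f ∧
    0 ≤ τb • ys ∧ 0 ≤ τb • ξs ∧ (τb • ys) ⬝ᵥ (τb • ξs) = 0 ∧
    0 ≤ τb ∧ 0 ≤ (0 : ℝ) ∧ τb * 0 = 0 := by
  intro τb
  have hgap : 0 < θ + c ⬝ᵥ ys - f ⬝ᵥ νs := by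
    rw [dotProduct_multiplier_eq_of_kkt hdual heq hcompl]
    linarith
  have hτ : 0 < τb := div_pos hθ hgap
  have hτgap : τb * (θ + c ⬝ᵥ ys - f ⬝ᵥ νs) = θ := div_mul_cancel₀ θ hgap.ne'
  refine ⟨hτ, ?_, ?_, by rw [mulVec_smul, heq], smul_nonneg hτ.le hy, smul_nonneg hτ.le hξ,
    ?_, hτ.le, le_rfl, mul_zero τb⟩
  · rw [stationarity_residual_smul, hdual, smul_zero]
  · rw [dotProduct_smul, dotProduct_smul, smul_eq_mul, smul_eq_mul]
    linear_combination hτgap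
  · rw [dotProduct_smul, smul_dotProduct, hcompl, smul_zero, smul_zero]

/-- Scaling a QP KKT point by τ̄ = θ/(θ + cᵀy* − fᵀν*) produces an HQP KKT point
with τ̂ = τ̄ > 0. -/
theorem qp_kkt_to_hqp_kkt (n m : ℕ) (C : Matrix (Fin n) (Fin n) ℝ) (hC : C.IsSymm)
    (c : Fin n → ℝ) (E : Matrix (Fin m) (Fin n) ℝ) (f : Fin m → ℝ)
    (θ : ℝ) (hθ : 0 < θ)
    (ys : Fin n → ℝ) (νs : Fin m → ℝ) (ξs : Fin n → ℝ)
    (hdual : C *ᵥ ys + c + Eᵀ *ᵥ νs - ξs = 0)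
    (heq : E *ᵥ ys = f)
    (hy : 0 ≤ ys) (hξ : 0 ≤ ξs) (hcompl : ys ⬝ᵥ ξs = 0)
    (hpos : 0 < θ + 2 * (c ⬝ᵥ ys) + ys ⬝ᵥ (C *ᵥ ys)) :
    let τb : ℝ := θ / (θ + c ⬝ᵥ ys - f ⬝ᵥ νs)
    0 < τb ∧
    C *ᵥ (τb • ys) + τb • c + Eᵀ *ᵥ (τb • νs) - τb • ξs = 0 ∧
    θ * τb - θ + c ⬝ᵥ (τb • ys) - f ⬝ᵥ (τb • νs) - 0 = 0 ∧
    E *ᵥ (τb • ys) = τb • f ∧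
    0 ≤ τb • ys ∧ 0 ≤ τb • ξs ∧ (τb • ys) ⬝ᵥ (τb • ξs) = 0 ∧
    0 ≤ τb ∧ 0 ≤ (0 : ℝ) ∧ τb * 0 = 0 :=
  qp_kkt_to_hqp_kkt_general n m C c E f θ hθ ys νs ξs hdual heq hy hξ hcompl hpos
end

section
/- Suppose (ν°, ξ°) is a certificate of infeasibility of the QP, i.e., Eᵀν° − ξ° = 0, ξ° ≥ 0, and fᵀν° = −1 (a Farkas certificate that {y ≥ 0 : Ey = f} is empty). Then (ŷ, τ̂) = (0, 0) with multipliers (ν̂, ξ̂, ω̂) = (θν°, θξ°, 0) satisfies the HQP KKT conditions: Cŷ + τ̂c + Eᵀν̂ − ξ̂ = 0, θτ̂ − θ + cᵀŷ − fᵀν̂ − ω̂ = 0, Eŷ = fτ̂, 0 ≤ ŷ ⊥ ξ̂ ≥ 0, 0 ≤ τ̂ ⊥ ω̂ ≥ 0. -/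
open Matrix

theorem infeasibility_cert_to_hqp_kkt_general (n m : ℕ)
    (C : Matrix (Fin n) (Fin n) ℝ)
    (c : Fin n → ℝ) (E : Matrix (Fin m) (Fin n) ℝ) (f : Fin m → ℝ)
    (θ : ℝ) (hθ : 0 < θ)
    (νc : Fin m → ℝ) (ξc : Fin n → ℝ)
    (hcert1 : Eᵀ *ᵥ νc - ξc = 0) (hcert2 : 0 ≤ ξc) (hcert3 : f ⬝ᵥ νc = -1) :
    C *ᵥ (0 : Fin n → ℝ) + (0 : ℝ) • c + Eᵀ *ᵥ (θ • νc) - θ • ξc = 0 ∧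
    θ * 0 - θ + c ⬝ᵥ (0 : Fin n → ℝ) - f ⬝ᵥ (θ • νc) - 0 = 0 ∧
    E *ᵥ (0 : Fin n → ℝ) = (0 : ℝ) • f ∧
    0 ≤ (0 : Fin n → ℝ) ∧ 0 ≤ θ • ξc ∧ (0 : Fin n → ℝ) ⬝ᵥ (θ • ξc) = 0 ∧
    (0 : ℝ) ≤ 0 ∧ (0 : ℝ) ≤ 0 ∧ (0 : ℝ) * 0 = 0 := by
  have stationarity_y : C *ᵥ 0 + (0 : ℝ) • c + Eᵀ *ᵥ (θ • νc) - θ • ξc = 0 := by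
    rw [mulVec_zero, zero_smul, zero_add, zero_add, mulVec_smul, ← smul_sub, hcert1, smul_zero]
  have stationarity_τ : θ * 0 - θ + c ⬝ᵥ 0 - f ⬝ᵥ (θ • νc) - 0 = 0 := by
    rw [dotProduct_smul, hcert3, dotProduct_zero, smul_eq_mul]
    ring
  exact ⟨stationarity_y, stationarity_τ, by rw [mulVec_zero, zero_smul], le_rfl,
    smul_nonneg hθ.le hcert2, zero_dotProduct _, le_rfl, le_rfl, mul_zero 0⟩

/-- A Farkas infeasibility certificate for the QP yields an HQP KKT point at
(ŷ, τ̂) = (0, 0) with multipliers (θν°, θξ°, 0). -/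
theorem infeasibility_cert_to_hqp_kkt (n m : ℕ)
    (C : Matrix (Fin n) (Fin n) ℝ) (hC : C.IsSymm)
    (c : Fin n → ℝ) (E : Matrix (Fin m) (Fin n) ℝ) (f : Fin m → ℝ)
    (θ : ℝ) (hθ : 0 < θ)
    (νc : Fin m → ℝ) (ξc : Fin n → ℝ)
    (hcert1 : Eᵀ *ᵥ νc - ξc = 0) (hcert2 : 0 ≤ ξc) (hcert3 : f ⬝ᵥ νc = -1) :
    C *ᵥ (0 : Fin n → ℝ) + (0 : ℝ) • c + Eᵀ *ᵥ (θ • νc) - θ • ξc = 0 ∧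
    θ * 0 - θ + c ⬝ᵥ (0 : Fin n → ℝ) - f ⬝ᵥ (θ • νc) - 0 = 0 ∧
    E *ᵥ (0 : Fin n → ℝ) = (0 : ℝ) • f ∧
    0 ≤ (0 : Fin n → ℝ) ∧ 0 ≤ θ • ξc ∧ (0 : Fin n → ℝ) ⬝ᵥ (θ • ξc) = 0 ∧
    (0 : ℝ) ≤ 0 ∧ (0 : ℝ) ≤ 0 ∧ (0 : ℝ) * 0 = 0 :=
  infeasibility_cert_to_hqp_kkt_general n m C c E f θ hθ νc ξc hcert1 hcert2 hcert3
end

section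
/- Suppose (ŷ, τ̂) = (0,0) with multipliers (ν̂, ξ̂, ω̂) satisfies the HQP KKT conditions (so Eᵀν̂ = ξ̂, −θ − fᵀν̂ − ω̂ = 0, ξ̂ ≥ 0, ω̂ ≥ 0) and θ > 0. Then (ν°, ξ°) = (ν̂/(θ+ω̂), ξ̂/(θ+ω̂)) satisfies Eᵀν° − ξ° = 0, ξ° ≥ 0, fᵀν° = −1, certifying infeasibility of {y ≥ 0 : Ey = f}. -/
open Matrix

theorem Matrix.mulVec_smul_sub_smul_eq_zero {m n R : Type*} [Fintype n] [CommRing R]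
    {A : Matrix m n R} {v : n → R} {w : m → R} (h : A *ᵥ v - w = 0) (c : R) :
    A *ᵥ (c • v) - c • w = 0 := by
  rw [mulVec_smul, ← smul_sub, h, smul_zero]

theorem dotProduct_inv_smul_eq_neg_one {n K : Type*} [Fintype n] [Field K]
    {f v : n → K} {c : K} (h : f ⬝ᵥ v = -c) (hc : c ≠ 0) :
    f ⬝ᵥ (c⁻¹ • v) = -1 := by
  rw [dotProduct_smul, h, smul_eq_mul, mul_neg, inv_mul_cancel₀ hc]

/-- From an HQP KKT point at (ŷ, τ̂) = (0,0), rescaling the multipliers by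
1/(θ+ω̂) produces a Farkas certificate of infeasibility of {y ≥ 0 : Ey = f}. -/
theorem hqp_kkt_zero_to_infeasibility_cert (n m : ℕ)
    (E : Matrix (Fin m) (Fin n) ℝ) (f : Fin m → ℝ)
    (θ : ℝ) (hθ : 0 < θ)
    (νh : Fin m → ℝ) (ξh : Fin n → ℝ) (ωh : ℝ)
    (hdual1 : Eᵀ *ᵥ νh - ξh = 0)
    (hdual2 : -θ - f ⬝ᵥ νh - ωh = 0)
    (hξ : 0 ≤ ξh) (hω : 0 ≤ ωh) :
    Eᵀ *ᵥ ((θ + ωh)⁻¹ • νh) - (θ + ωh)⁻¹ • ξh = 0 ∧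
    0 ≤ (θ + ωh)⁻¹ • ξh ∧
    f ⬝ᵥ ((θ + ωh)⁻¹ • νh) = -1 := by
  have hpos : 0 < θ + ωh := by linarith
  have hfν : f ⬝ᵥ νh = -(θ + ωh) := by linarith
  exact ⟨mulVec_smul_sub_smul_eq_zero hdual1 _, smul_nonneg (inv_nonneg.2 hpos.le) hξ,
    dotProduct_inv_smul_eq_neg_one hfν hpos.ne'⟩
end

section
/- If x, s ∈ ℝ^{n+1} satisfy x > 0, s > 0, and the centrality condition x_i s_i ≥ γ μ for all i, where μ = xᵀs/(n+1) and γ ∈ (0,1), then ‖(XS)^{−1/2}(Xs − σμe)‖² ≤ (1 − 2σ + σ²/γ)(n+1)μ for any σ ∈ (0,1), where X = Diag(x), S = Diag(s), e is the all-ones vector. -/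
open Matrix

/-!
Expanding the square, `(t - c)² / t = t - 2c + c² / t`, and centrality `t ≥ γμ` bounds the last
term by `c² / (γμ)`. Summing over the `n + 1` coordinates with `∑ xᵢsᵢ = (n + 1)μ` and
`c = σμ` gives the bound.
-/

lemma sq_sub_div_le_of_le {m t c : ℝ} (hm : 0 < m) (hmt : m ≤ t) :
    (t - c) ^ 2 / t ≤ t - 2 * c + c ^ 2 / m := by
  have ht : 0 < t := hm.trans_le hmt
  have hexpand : (t - c) ^ 2 / t = t - 2 * c + c ^ 2 / t := by
    field_simp
    ring
  rw [hexpand]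
  gcongr

lemma sum_sq_sub_div_le {ι : Type*} [Fintype ι] (t : ι → ℝ) {γ μ σ : ℝ}
    (hγ : 0 < γ) (hμ : 0 < μ) (ht : ∀ i, γ * μ ≤ t i)
    (hsum : ∑ i, t i = Fintype.card ι * μ) :
    ∑ i, (t i - σ * μ) ^ 2 / t i ≤ (1 - 2 * σ + σ ^ 2 / γ) * Fintype.card ι * μ := by
  calc ∑ i, (t i - σ * μ) ^ 2 / t i
      ≤ ∑ i, (t i - 2 * (σ * μ) + (σ * μ) ^ 2 / (γ * μ)) :=
        Finset.sum_le_sum fun i _ => sq_sub_div_le_of_le (by positivity) (ht i)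
    _ = (1 - 2 * σ + σ ^ 2 / γ) * Fintype.card ι * μ := by
        rw [Finset.sum_add_distrib, Finset.sum_sub_distrib, hsum]
        simp only [Finset.sum_const, Finset.card_univ, nsmul_eq_mul]
        field_simp

theorem neighborhood_bound_general (n : ℕ)
    (x s : Fin (n + 1) → ℝ)
    (hx : ∀ i, 0 < x i) (hs : ∀ i, 0 < s i)
    (γ σ : ℝ) (hγ : γ ∈ Set.Ioo (0 : ℝ) 1)
    (hcent : ∀ i, x i * s i ≥ γ * (x ⬝ᵥ s / (n + 1))) :
    ∑ i, (x i * s i - σ * (x ⬝ᵥ s / (n + 1))) ^ 2 / (x i * s i) ≤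
      (1 - 2 * σ + σ ^ 2 / γ) * (n + 1) * (x ⬝ᵥ s / (n + 1)) := by
  have hcard : (Fintype.card (Fin (n + 1)) : ℝ) = n + 1 := by simp
  have hμ : 0 < x ⬝ᵥ s / (n + 1) :=
    div_pos (Finset.sum_pos (fun i _ => mul_pos (hx i) (hs i)) Finset.univ_nonempty) (by positivity)
  have hsum : ∑ i, x i * s i = Fintype.card (Fin (n + 1)) * (x ⬝ᵥ s / (n + 1)) := by
    rw [hcard, mul_div_cancel₀ _ (by positivity)]
    rfl
  simpa only [hcard] using sum_sq_sub_div_le (fun i => x i * s i) hγ.1 hμ hcent hsum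

/-- Standard interior-point neighborhood bound:
‖(XS)^{−1/2}(Xs − σμe)‖² ≤ (1 − 2σ + σ²/γ)(n+1)μ. -/
theorem neighborhood_bound (n : ℕ)
    (x s : Fin (n + 1) → ℝ)
    (hx : ∀ i, 0 < x i) (hs : ∀ i, 0 < s i)
    (γ σ : ℝ) (hγ : γ ∈ Set.Ioo (0 : ℝ) 1) (hσ : σ ∈ Set.Ioo (0 : ℝ) 1)
    (hcent : ∀ i, x i * s i ≥ γ * (x ⬝ᵥ s / (n + 1))) :
    ∑ i, (x i * s i - σ * (x ⬝ᵥ s / (n + 1))) ^ 2 / (x i * s i) ≤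
      (1 - 2 * σ + σ ^ 2 / γ) * (n + 1) * (x ⬝ᵥ s / (n + 1)) :=
  neighborhood_bound_general n x s hx hs γ σ hγ hcent
end
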